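/- arXiv:0704.2402 — 2 statements merged into one kernel-verified Lean document; each statement's English description precedes it below -/
import Mathlib

section
/- If q_m denotes the m-th prime number and c : ℕ → ℕ is any positive sequence, then the sequence defined by a(n) = Σ_{q_m | n} q_m^{c_m} (sum over those m with q_m dividing n) satisfies a(q_m) = q_m^{c_m}, and hence limsup_{n→∞} a(n)/c(n) need not be finite; in particular for c_m chosen so that q_m^{c_m} ≥ m · c_{q_m}, one has limsup_{n→∞} a(n)/c(n) = ∞. -/
open Filter

/-!
Distinct primes do not divide one another, so among the summands of `a (q m)` only the one
indexed by `m` survives, giving `a (q m) = q m ^ c m`. Under the growth assumption this makes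
`a (q m) / c (q m) ≥ m`, and the primes `q m` tend to infinity, so the ratio is unbounded
along a sequence tending to infinity.
-/

lemma sum_range_ite_dvd_prime {M : Type*} [AddCommMonoid M] {q : ℕ → ℕ}
    (hprime : ∀ k, (q k).Prime) (hinj : Function.Injective q) (f : ℕ → M) {m N : ℕ}
    (hm : m < N) :
    ∑ k ∈ Finset.range N, (if q k ∣ q m then f k else 0) = f m := by
  rw [Finset.sum_eq_single_of_mem m (Finset.mem_range.2 hm), if_pos dvd_rfl]
  intro k _ hkm
  rw [if_neg]
  exact fun hdvd => hkm (hinj ((Nat.prime_dvd_prime_iff_eq (hprime k) (hprime m)).1 hdvd))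

lemma limsup_coe_eq_top_of_frequently_le {α : Type*} {l : Filter α} {u : α → ℝ}
    (h : ∀ M : ℝ, ∃ᶠ x in l, M ≤ u x) :
    limsup (fun x => (u x : EReal)) l = ⊤ := by
  refine EReal.eq_top_iff_forall_lt _ |>.2 fun y => ?_
  obtain ⟨M, hyM⟩ := exists_gt y
  refine (EReal.coe_lt_coe_iff.2 hyM).trans_le (le_limsup_of_frequently_le' ?_)
  exact (h M).mono fun x hx => EReal.coe_le_coe_iff.2 hx

/-- With `q m` the `m`-th prime and `c` a positive sequence, the sequence
`a n = ∑_{q_m ∣ n} q_m ^ c_m` satisfies `a (q_m) = q_m ^ c_m`; and if `c` is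
chosen so that `q_m ^ c_m ≥ m * c (q_m)`, then `limsup a(n)/c(n) = ∞`. -/
theorem stmt_1 (q : ℕ → ℕ) (hq : ∀ m, q m = Nat.nth Nat.Prime m)
    (c : ℕ → ℕ) (hc : ∀ n, 1 ≤ c n)
    (a : ℕ → ℕ)
    (ha : ∀ n, a n = ∑ m ∈ Finset.range n, if q m ∣ n then q m ^ c m else 0) :
    (∀ m, a (q m) = q m ^ c m) ∧
    ((∀ m, q m ^ c m ≥ m * c (q m)) →
      Filter.limsup (fun n => (((a n : ℝ) / (c n : ℝ) : ℝ) : EReal)) atTop = ⊤) := by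
  obtain rfl : q = Nat.nth Nat.Prime := funext hq
  have hmono : StrictMono (Nat.nth Nat.Prime) := Nat.nth_strictMono Nat.infinite_setOfPred_prime
  have ha_prime (m : ℕ) : a (Nat.nth Nat.Prime m) = Nat.nth Nat.Prime m ^ c m := by
    rw [ha]
    exact sum_range_ite_dvd_prime Nat.prime_nth_prime hmono.injective _
      (by linarith [Nat.add_two_le_nth_prime m])
  refine ⟨ha_prime, fun hgrowth => limsup_coe_eq_top_of_frequently_le fun M => ?_⟩
  have hratio : ∀ᶠ m : ℕ in atTop,
      M ≤ (a (Nat.nth Nat.Prime m) : ℝ) / c (Nat.nth Nat.Prime m) := by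
    filter_upwards [eventually_ge_atTop ⌈M⌉₊] with m hm
    have hcpos : (0 : ℝ) < c (Nat.nth Nat.Prime m) := by exact_mod_cast hc _
    rw [le_div_iff₀ hcpos, ha_prime]
    calc M * c (Nat.nth Nat.Prime m) ≤ m * c (Nat.nth Nat.Prime m) := by
          gcongr; exact (Nat.le_ceil M).trans (by exact_mod_cast hm)
      _ ≤ (Nat.nth Nat.Prime m ^ c m : ℕ) := by exact_mod_cast hgrowth m
  exact hmono.tendsto_atTop.frequently hratio.frequently
end

section
/- For every sequence c : ℕ → ℕ with c_n ≥ 1, there exists a sequence a : ℕ → ℤ satisfying the Dold congruences Σ_{d ∣ n} μ(n/d) a(d) ≡ 0 (mod n) for all n, and with limsup_{n→∞} |a(n)|/c_n = ∞; indeed a(n) = -Σ_{p ∣ n, p prime} p^{e_p} works where e_p is chosen with p^{e_p} ≥ p · c_p. -/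
/-!
Write `a n = ∑_{d ∣ n} f d` with `f p = -p^{e_p}` on primes and `f = 0` elsewhere. Möbius inversion
turns the Dold sum at `n` into `f n`, which is divisible by `n` as soon as `e_p ≥ 1`. Along primes,
`|a p| / c_p = p^{e_p} / c_p ≥ p`, so the ratio is unbounded.
-/

open Filter ArithmeticFunction
open scoped ArithmeticFunction.Moebius

theorem sum_moebius_mul_eq_of_sum_divisors_eq {R : Type*} [NonAssocRing R] {f a : ℕ → R}
    (h : ∀ n > 0, ∑ d ∈ n.divisors, f d = a n) {n : ℕ} (hn : 0 < n) :
    ∑ d ∈ n.divisors, (μ (n / d) : R) * a d = f n := by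
  rw [← sum_eq_iff_sum_mul_moebius_eq.mp h n hn,
    ← Nat.sum_divisorsAntidiagonal' (fun i j => (μ i : R) * a j)]

theorem dvd_sum_moebius_mul_of_sum_divisors_eq {f a : ℕ → ℤ}
    (h : ∀ n > 0, ∑ d ∈ n.divisors, f d = a n) (hf : ∀ n : ℕ, (n : ℤ) ∣ f n) {n : ℕ}
    (hn : 0 < n) :
    (n : ℤ) ∣ ∑ d ∈ n.divisors, (μ (n / d) : ℤ) * a d := by
  have hinv := sum_moebius_mul_eq_of_sum_divisors_eq h hn
  simp only [Int.cast_id] at hinv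
  exact hinv ▸ hf n

theorem Nat.sum_primeFactors_eq_sum_divisors_ite {M : Type*} [AddCommMonoid M] (g : ℕ → M)
    (n : ℕ) : ∑ p ∈ n.primeFactors, g p = ∑ d ∈ n.divisors, if d.Prime then g d else 0 := by
  rw [Nat.primeFactors_eq_to_filter_divisors_prime, Finset.sum_filter]

theorem EReal.limsup_coe_eq_top_of_frequently_natCast_le {u : ℕ → ℝ}
    (h : ∃ᶠ n : ℕ in atTop, (n : ℝ) ≤ u n) : limsup (fun n => (u n : EReal)) atTop = ⊤ := by
  refine EReal.eq_top_iff_forall_lt _ |>.mpr fun y => ?_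
  have hfreq : ∃ᶠ n in atTop, ((y + 1 : ℝ) : EReal) ≤ u n := by
    refine (h.and_eventually (eventually_ge_atTop ⌈y + 1⌉₊)).mono fun n ⟨hn, hyn⟩ => ?_
    exact EReal.coe_le_coe_iff.mpr ((Nat.le_ceil _).trans ((Nat.cast_le.mpr hyn).trans hn))
  exact (EReal.coe_lt_coe_iff.mpr (lt_add_one y)).trans_le (le_limsup_of_frequently_le' hfreq)

/-- For every positive sequence `c` there is a sequence `a : ℕ → ℤ` satisfying the
Dold congruences `n ∣ ∑_{d ∣ n} μ(n/d) a(d)` for all `n ≥ 1`, and with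
`limsup |a n| / c n = ∞`; indeed `a n = -∑_{p ∣ n, p prime} p^{e_p}` works for
`e` with `p^{e_p} ≥ p · c_p`. -/
theorem stmt_18 (c : ℕ → ℕ) (hc : ∀ n, 1 ≤ c n) :
    ∃ a : ℕ → ℤ,
      (∀ n : ℕ, 1 ≤ n →
        (n : ℤ) ∣ ∑ d ∈ n.divisors, (ArithmeticFunction.moebius (n / d) : ℤ) * a d) ∧
      Filter.limsup (fun n => ((|(a n : ℝ)| / (c n : ℝ) : ℝ) : EReal)) atTop = ⊤ ∧
      ∃ e : ℕ → ℕ, (∀ p : ℕ, p.Prime → (p : ℕ) ^ e p ≥ p * c p) ∧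
        ∀ n, a n = -∑ p ∈ n.primeFactors, (p : ℤ) ^ e p := by
  set e : ℕ → ℕ := fun p => p * c p
  have he : ∀ p : ℕ, p.Prime → p ^ e p ≥ p * c p := fun p hp => (Nat.lt_pow_self hp.one_lt).le
  set a : ℕ → ℤ := fun n => -∑ p ∈ n.primeFactors, (p : ℤ) ^ e p
  set f : ℕ → ℤ := fun d => if d.Prime then -(d : ℤ) ^ e d else 0
  have ha : ∀ n > 0, ∑ d ∈ n.divisors, f d = a n := fun n _ => by
    simp only [a, f, Nat.sum_primeFactors_eq_sum_divisors_ite, ← Finset.sum_neg_distrib,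
      apply_ite Neg.neg, neg_zero]
  have hf : ∀ d : ℕ, (d : ℤ) ∣ f d := fun d => by
    by_cases hd : d.Prime
    · simpa only [f, if_pos hd] using (dvd_pow_self _ (Nat.mul_pos hd.pos (hc d)).ne').neg_right
    · simp only [f, if_neg hd, dvd_zero]
  have ha_prime : ∀ p : ℕ, p.Prime → (p : ℝ) ≤ |(a p : ℝ)| / c p := fun p hp => by
    have hap : (a p : ℝ) = -(p : ℝ) ^ e p := by simp [a, hp.primeFactors]
    rw [hap, abs_neg, abs_of_nonneg (by positivity), le_div_iff₀ (by exact_mod_cast hc p)]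
    exact_mod_cast he p hp
  refine ⟨a, fun n hn => dvd_sum_moebius_mul_of_sum_divisors_eq ha hf hn, ?_, e, he, fun n => rfl⟩
  exact EReal.limsup_coe_eq_top_of_frequently_natCast_le <|
    (Nat.frequently_atTop_iff_infinite.mpr Nat.infinite_setOfPred_prime).mono ha_prime
end
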